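/- arXiv:2007.10949 — 4 statements merged into one kernel-verified Lean document; each statement's English description precedes it below -/
import Mathlib

section
/- For real r and ω with cosh 2r + cos 2ω > 0, the identity (1 − cos(2θ(r,ω))/ρ(r,ω)²)² + (sin(2θ(r,ω))/ρ(r,ω)²)² = ((cosh 2r − cos 2ω)/(cosh 2r + cos 2ω))² holds, where ρ(r,ω)² = (cosh 2r + cos 2ω)/2 and θ(r,ω) is defined by cos θ = cosh r cos ω/ρ, sin θ = sinh r sin ω/ρ. -/
theorem stmt_2 (r ω θ : ℝ) (h : 0 < Real.cosh (2 * r) + Real.cos (2 * ω))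
    (hcos : Real.cos θ * Real.sqrt ((Real.cosh (2 * r) + Real.cos (2 * ω)) / 2)
      = Real.cosh r * Real.cos ω)
    (hsin : Real.sin θ * Real.sqrt ((Real.cosh (2 * r) + Real.cos (2 * ω)) / 2)
      = Real.sinh r * Real.sin ω) :
    (1 - Real.cos (2 * θ) / ((Real.cosh (2 * r) + Real.cos (2 * ω)) / 2)) ^ 2
        + (Real.sin (2 * θ) / ((Real.cosh (2 * r) + Real.cos (2 * ω)) / 2)) ^ 2
      = ((Real.cosh (2 * r) - Real.cos (2 * ω))
          / (Real.cosh (2 * r) + Real.cos (2 * ω))) ^ 2 := by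
  set s : ℝ := (Real.cosh (2 * r) + Real.cos (2 * ω)) / 2 with hs
  set A := Real.cosh r
  set B := Real.sinh r
  set C := Real.cos ω
  set D := Real.sin ω
  have hspos : 0 < s := by positivity
  have hsq : Real.sqrt s ^ 2 = s := Real.sq_sqrt hspos.le
  have hc2 : Real.cos (2 * θ) * s = 2 * (A * C) ^ 2 - s := by
    rw [Real.cos_two_mul]
    linear_combination (-2 * Real.cos θ ^ 2) * hsq
      + 2 * (Real.cos θ * Real.sqrt s + A * C) * hcos
  have hs2 : Real.sin (2 * θ) * s = 2 * (B * D) * (A * C) := by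
    rw [Real.sin_two_mul]
    linear_combination (-2 * Real.sin θ * Real.cos θ) * hsq
      + (2 * Real.cos θ * Real.sqrt s) * hsin + (2 * B * D) * hcos
  have hch : Real.cosh (2 * r) = 2 * A ^ 2 - 1 := by
    rw [Real.cosh_two_mul]; linear_combination -(Real.cosh_sq_sub_sinh_sq r)
  have hco : Real.cos (2 * ω) = 2 * C ^ 2 - 1 := Real.cos_two_mul ω
  have hB : B ^ 2 = A ^ 2 - 1 := by
    have := Real.cosh_sq r; nlinarith
  have hD : D ^ 2 = 1 - C ^ 2 := by
    have := Real.sin_sq_add_cos_sq ω; nlinarith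
  have key : (s ^ 2 - (2 * (A * C) ^ 2 - s)) ^ 2 + (2 * (B * D) * (A * C)) ^ 2
      = ((Real.cosh (2 * r) - Real.cos (2 * ω)) / 2) ^ 2 * s ^ 2 := by
    rw [hs, hch, hco]
    linear_combination (4 * A ^ 2 * C ^ 2 * D ^ 2) * hB
      + (4 * A ^ 4 * C ^ 2 - 4 * A ^ 2 * C ^ 2) * hD
  have hsne : s ≠ 0 := hspos.ne'
  have h2 : Real.cosh (2 * r) + Real.cos (2 * ω) = 2 * s := by rw [hs]; ring
  field_simp [h2]
  linear_combination 4 * key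
    - 4 * (2 * s ^ 2 - Real.cos (2 * θ) * s - (2 * (A * C) ^ 2 - s)) * hc2
    + 4 * (Real.sin (2 * θ) * s + 2 * (B * D) * (A * C)) * hs2
end

section
/- With ρ♮(r,ω) = (cosh 2r − cos 2ω)/(cosh 2r + cos 2ω) and θ♮(r,ω) = 2 arctan(sin 2ω / sinh 2r), the Cauchy–Riemann-type symmetry identities hold: ∂(log ρ♮)/∂r = ∂θ♮/∂ω = 4 sinh 2r cos 2ω / (sinh² 2r + sin² 2ω) and ∂θ♮/∂r = −∂(log ρ♮)/∂ω = −4 cosh 2r sin 2ω / (sinh² 2r + sin² 2ω). -/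
/-- `log ρ♮(r,ω)` where `ρ♮(r,ω) = (cosh 2r − cos 2ω)/(cosh 2r + cos 2ω)`. -/
noncomputable def logRhoNat (r ω : ℝ) : ℝ :=
  Real.log ((Real.cosh (2 * r) - Real.cos (2 * ω)) / (Real.cosh (2 * r) + Real.cos (2 * ω)))

/-- `θ♮(r,ω) = 2 arctan(sin 2ω / sinh 2r)`. -/
noncomputable def thetaNat (r ω : ℝ) : ℝ :=
  2 * Real.arctan (Real.sin (2 * ω) / Real.sinh (2 * r))

/-!
Both derivatives come from the quotient rule: `log ((f - g)/(f + g))` has derivative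
`2 (f' g - f g') / (f² - g²)` and `arctan (f / g)` has derivative `(f' g - f g') / (f² + g²)`.
With `f = cosh 2r`, `g = cos 2ω` resp. `f = sin 2ω`, `g = sinh 2r`, the two denominators agree
because `cosh² 2r - cos² 2ω = sinh² 2r + sin² 2ω`, and the numerators match up to sign.
-/

open Real

namespace HasDerivAt

variable {f g : ℝ → ℝ} {f' g' x : ℝ}

theorem log_sub_div_add (hf : HasDerivAt f f' x) (hg : HasDerivAt g g' x)
    (hsub : f x - g x ≠ 0) (hadd : f x + g x ≠ 0) :
    HasDerivAt (fun t => Real.log ((f t - g t) / (f t + g t)))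
      (2 * (f' * g x - f x * g') / (f x ^ 2 - g x ^ 2)) x := by
  refine (((hf.sub hg).div (hf.add hg) hadd).log (div_ne_zero hsub hadd)).congr_deriv ?_
  rw [show f x ^ 2 - g x ^ 2 = (f x - g x) * (f x + g x) by ring]
  simp only [Pi.sub_apply, Pi.add_apply, Pi.div_apply]
  field_simp
  ring

theorem arctan_div (hf : HasDerivAt f f' x) (hg : HasDerivAt g g' x) (hg0 : g x ≠ 0) :
    HasDerivAt (fun t => Real.arctan (f t / g t))
      ((f' * g x - f x * g') / (f x ^ 2 + g x ^ 2)) x := by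
  refine (hf.div hg hg0).arctan.congr_deriv ?_
  simp only [Pi.div_apply]
  field_simp
  ring

end HasDerivAt

theorem abs_cos_lt_cosh {x : ℝ} (hx : x ≠ 0) (y : ℝ) : |cos y| < cosh x :=
  (abs_cos_le_one y).trans_lt (one_lt_cosh.2 hx)

theorem cosh_sq_sub_cos_sq (x y : ℝ) : cosh x ^ 2 - cos y ^ 2 = sinh x ^ 2 + sin y ^ 2 := by
  rw [cosh_sq, ← sin_sq_add_cos_sq y]
  ring

theorem stmt_5 (r ω : ℝ) (h : Real.sinh (2 * r) ≠ 0) :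
    HasDerivAt (fun t => logRhoNat t ω)
      (4 * Real.sinh (2 * r) * Real.cos (2 * ω)
        / (Real.sinh (2 * r) ^ 2 + Real.sin (2 * ω) ^ 2)) r ∧
    HasDerivAt (fun s => thetaNat r s)
      (4 * Real.sinh (2 * r) * Real.cos (2 * ω)
        / (Real.sinh (2 * r) ^ 2 + Real.sin (2 * ω) ^ 2)) ω ∧
    HasDerivAt (fun t => thetaNat t ω)
      (-(4 * Real.cosh (2 * r) * Real.sin (2 * ω))
        / (Real.sinh (2 * r) ^ 2 + Real.sin (2 * ω) ^ 2)) r ∧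
    HasDerivAt (fun s => logRhoNat r s)
      (4 * Real.cosh (2 * r) * Real.sin (2 * ω)
        / (Real.sinh (2 * r) ^ 2 + Real.sin (2 * ω) ^ 2)) ω := by
  have h2r : 2 * r ≠ 0 := fun h0 => h (by rw [h0, sinh_zero])
  obtain ⟨hsub, hadd⟩ :
      0 < cosh (2 * r) - cos (2 * ω) ∧ 0 < cosh (2 * r) + cos (2 * ω) := by
    have := abs_lt.1 (abs_cos_lt_cosh h2r (2 * ω))
    constructor <;> linarith
  have hden := cosh_sq_sub_cos_sq (2 * r) (2 * ω)
  have hr : HasDerivAt (fun t => 2 * t) 2 r := by simpa using (hasDerivAt_id r).const_mul 2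
  have hω : HasDerivAt (fun s => 2 * s) 2 ω := by simpa using (hasDerivAt_id ω).const_mul 2
  refine ⟨?_, ?_, ?_, ?_⟩
  · exact (HasDerivAt.log_sub_div_add hr.cosh (hasDerivAt_const r _) hsub.ne' hadd.ne').congr_deriv
      (by rw [hden]; ring)
  · exact ((HasDerivAt.arctan_div hω.sin (hasDerivAt_const ω _) h).const_mul 2).congr_deriv
      (by ring)
  · exact ((HasDerivAt.arctan_div (hasDerivAt_const r _) hr.sinh h).const_mul 2).congr_deriv
      (by ring)
  · exact (HasDerivAt.log_sub_div_add (hasDerivAt_const ω _) hω.cos hsub.ne' hadd.ne')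
      |>.congr_deriv (by rw [hden]; ring)
end

section
/- For real x with 0 < x ≤ 1, the inequality log((1 + √(1−x²))/x) − √(1 − x²) ≥ (1/3)(2 − 2x)^{3/2} holds. -/
/-!
Both sides vanish at `x = 1`, so it suffices that on `(x, 1)` the derivative of the left side,
`-√(2 - 2t)`, dominates that of the right side, `-√(1 - t²)/t`. This is
`t √(2 - 2t) ≤ √(1 - t²)`, i.e. `0 ≤ 1 - t² - t²(2 - 2t) = (1 - t)²(1 + 2t)`.
-/

open Real Set

lemma hasDerivAt_log_one_add_sqrt_div_sub_sqrt {t : ℝ} (ht0 : 0 < t) (ht1 : t < 1) :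
    HasDerivAt (fun y => log ((1 + √(1 - y ^ 2)) / y) - √(1 - y ^ 2)) (-√(1 - t ^ 2) / t) t := by
  have hpos : 0 < 1 - t ^ 2 := by nlinarith
  have hs : 0 < √(1 - t ^ 2) := sqrt_pos.mpr hpos
  have hsq : HasDerivAt (fun y => √(1 - y ^ 2)) (-(2 * t) / (2 * √(1 - t ^ 2))) t :=
    (((hasDerivAt_pow 2 t).const_sub 1).congr_deriv (by ring)).sqrt hpos.ne'
  have hlog := ((hsq.const_add 1).div (hasDerivAt_id' t) ht0.ne').log
    (div_pos (by positivity) ht0).ne'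
  refine (hlog.sub hsq).congr_deriv ?_
  have hs2 : √(1 - t ^ 2) ^ 2 = 1 - t ^ 2 := sq_sqrt hpos.le
  simp only [Pi.div_apply]
  field_simp
  linear_combination √(1 - t ^ 2) * hs2

lemma hasDerivAt_two_sub_two_mul_rpow_three_halves (t : ℝ) :
    HasDerivAt (fun y => 1 / 3 * (2 - 2 * y) ^ ((3 : ℝ) / 2)) (-√(2 - 2 * t)) t := by
  have hlin : HasDerivAt (fun y : ℝ => 2 - 2 * y) (-2) t := by
    simpa using ((hasDerivAt_id t).const_mul (2 : ℝ)).const_sub 2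
  refine ((hlin.rpow_const (p := (3 : ℝ) / 2) (Or.inr (by norm_num))).const_mul
    (1 / 3)).congr_deriv ?_
  rw [show (3 : ℝ) / 2 - 1 = 1 / 2 by norm_num, ← sqrt_eq_rpow]
  ring

lemma mul_sqrt_two_sub_two_mul_le_sqrt {t : ℝ} (ht0 : 0 ≤ t) :
    t * √(2 - 2 * t) ≤ √(1 - t ^ 2) := by
  rw [show t * √(2 - 2 * t) = √(t ^ 2 * (2 - 2 * t)) by rw [sqrt_mul (sq_nonneg t), sqrt_sq ht0]]
  exact sqrt_le_sqrt (by nlinarith [mul_nonneg (sq_nonneg (1 - t)) (by linarith : 0 ≤ 1 + 2 * t)])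

theorem stmt_11 (x : ℝ) (hx0 : 0 < x) (hx1 : x ≤ 1) :
    (1 / 3) * (2 - 2 * x) ^ ((3 : ℝ) / 2)
      ≤ Real.log ((1 + Real.sqrt (1 - x ^ 2)) / x) - Real.sqrt (1 - x ^ 2) := by
  set φ : ℝ → ℝ := fun y =>
    (log ((1 + √(1 - y ^ 2)) / y) - √(1 - y ^ 2)) - 1 / 3 * (2 - 2 * y) ^ ((3 : ℝ) / 2)
  have hcont : ContinuousOn φ (Icc x 1) := by
    refine ContinuousOn.sub (ContinuousOn.sub ?_ (by fun_prop))
      fun y _ => (hasDerivAt_two_sub_two_mul_rpow_three_halves y).continuousAt.continuousWithinAt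
    refine ContinuousOn.log (by fun_prop (disch := grind)) fun y hy => ?_
    have : 0 < y := hx0.trans_le hy.1
    positivity
  have hanti : AntitoneOn φ (Icc x 1) := by
    refine antitoneOn_of_hasDerivWithinAt_nonpos (convex_Icc x 1) hcont
      (f' := fun t => -√(1 - t ^ 2) / t + √(2 - 2 * t)) (fun t ht => ?_) fun t ht => ?_
    all_goals rw [interior_Icc] at ht
    · exact ((hasDerivAt_log_one_add_sqrt_div_sub_sqrt (hx0.trans ht.1) ht.2).sub
        (hasDerivAt_two_sub_two_mul_rpow_three_halves t)).hasDerivWithinAt.congr_deriv (by ring)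
    · have ht0 := hx0.trans ht.1
      have := mul_sqrt_two_sub_two_mul_le_sqrt ht0.le
      rw [neg_div, neg_add_le_iff_le_add, add_zero, le_div_iff₀ ht0]
      linarith
  have h := hanti (left_mem_Icc.mpr hx1) (right_mem_Icc.mpr hx1) hx1
  have hφ1 : φ 1 = 0 := by norm_num [φ]
  simp only [φ] at h hφ1
  linarith
end

section
/- Let b ⊆ q be nonzero fractional ideals of a number field F with b | q. For any x generating b/q as an O-module (O the ring of integers), there exists a unique class y ∈ b⁻¹/(q b⁻²) generating b⁻¹/(q b⁻²) as an O-module such that x·y ∈ 1 + q b⁻¹. -/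
/-!
Since `b` is invertible, `x` generating `b` modulo `q` gives `1 ∈ b b⁻¹ ⊆ x b⁻¹ + q b⁻¹`, i.e.
`x y ≡ 1 (mod q b⁻¹)` for some `y ∈ b⁻¹`. Such a `y` generates `b⁻¹` modulo `q b⁻²`, because every
`w ∈ b⁻¹` is `(w x) y - w (x y - 1)` with `w x ∈ 𝒪`. Uniqueness comes from the identity
`y - y' = y' (x y - 1) - y (x y' - 1)`.
-/

open NumberField

namespace Submodule

variable {R A : Type*} [CommRing R] [CommRing A] [Algebra R A]

theorem exists_mem_mul_sub_one_mem_of_le_span_sup {B C Q : Submodule R A} {x : A}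
    (hgen : B ≤ span R {x} ⊔ Q) (hBC : 1 ≤ B * C) :
    ∃ y ∈ C, x * y - 1 ∈ Q * C := by
  have h1 : (1 : A) ∈ span R {x} * C ⊔ Q * C :=
    sup_mul _ Q C ▸ mul_le_mul_left hgen C (one_le.mp hBC)
  obtain ⟨s, hs, z, hz, hsz⟩ := mem_sup.mp h1
  obtain ⟨y, hy, rfl⟩ := mem_span_singleton_mul.mp hs
  refine ⟨y, hy, ?_⟩
  rw [show x * y - 1 = -z by rw [← hsz]; ring]
  exact neg_mem hz

theorem le_span_singleton_sup_of_mul_sub_one_mem {B C Q : Submodule R A} {x y : A}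
    (hCB : C * B ≤ 1) (hx : x ∈ B) (hxy : x * y - 1 ∈ Q * C) :
    C ≤ span R {y} ⊔ Q * C * C := by
  intro w hw
  obtain ⟨a, ha⟩ := mem_one.mp (hCB (mul_mem_mul hw hx))
  have hay : a • y = w * x * y := by rw [Algebra.smul_def, ha]
  refine mem_sup.mpr ⟨a • y, smul_mem _ a (mem_span_singleton_self y),
    -((x * y - 1) * w), neg_mem (mul_mem_mul hxy hw), ?_⟩
  rw [hay]
  ring

theorem sub_mem_mul_of_mul_sub_one_mem {C I : Submodule R A} {x y y' : A}
    (hy : y ∈ C) (hy' : y' ∈ C) (hxy : x * y - 1 ∈ I) (hxy' : x * y' - 1 ∈ I) :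
    y - y' ∈ I * C := by
  rw [show y - y' = (x * y - 1) * y' - (x * y' - 1) * y by ring]
  exact sub_mem (mul_mem_mul hxy hy') (mul_mem_mul hxy' hy)

end Submodule

theorem stmt_13_general (F : Type*) [Field F] [NumberField F]
    (b q : FractionalIdeal (nonZeroDivisors (RingOfIntegers F)) F)
    (hb : b ≠ 0) (x : F) (hx : x ∈ b)
    (hxgen : (b : Submodule (RingOfIntegers F) F) ≤
      Submodule.span (RingOfIntegers F) {x} ⊔ (q : Submodule (RingOfIntegers F) F)) :
    ∃ y : F,
      (y ∈ b⁻¹ ∧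
        ((b⁻¹ : FractionalIdeal (nonZeroDivisors (RingOfIntegers F)) F) :
            Submodule (RingOfIntegers F) F) ≤
          Submodule.span (RingOfIntegers F) {y} ⊔
            ((q * b⁻¹ * b⁻¹ : FractionalIdeal (nonZeroDivisors (RingOfIntegers F)) F) :
              Submodule (RingOfIntegers F) F) ∧
        x * y - 1 ∈ q * b⁻¹) ∧
      ∀ y' : F,
        (y' ∈ b⁻¹ ∧
          ((b⁻¹ : FractionalIdeal (nonZeroDivisors (RingOfIntegers F)) F) :
              Submodule (RingOfIntegers F) F) ≤
            Submodule.span (RingOfIntegers F) {y'} ⊔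
              ((q * b⁻¹ * b⁻¹ : FractionalIdeal (nonZeroDivisors (RingOfIntegers F)) F) :
                Submodule (RingOfIntegers F) F) ∧
          x * y' - 1 ∈ q * b⁻¹) →
        y - y' ∈ q * b⁻¹ * b⁻¹ := by
  have hbb : (b : Submodule (RingOfIntegers F) F) * (b⁻¹ : FractionalIdeal _ F) = 1 := by
    rw [← FractionalIdeal.coe_mul, mul_inv_cancel₀ hb, FractionalIdeal.coe_one]
  simp only [← FractionalIdeal.mem_coe, FractionalIdeal.coe_mul] at hx ⊢
  obtain ⟨y, hy, hxy⟩ := Submodule.exists_mem_mul_sub_one_mem_of_le_span_sup hxgen hbb.ge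
  refine ⟨y, ⟨hy, ?_, hxy⟩, fun y' ⟨hy', _, hxy'⟩ ↦
    Submodule.sub_mem_mul_of_mul_sub_one_mem hy hy' hxy hxy'⟩
  exact Submodule.le_span_singleton_sup_of_mul_sub_one_mem (by rw [mul_comm]; exact hbb.le)
    hx hxy

/-- Definition 2.1 (paper): for fractional ideals `q ⊆ b` of a number field and a generator `x`
of the `𝒪`-module `b/q`, there is a unique class `y ∈ (b⁻¹/(q b⁻²))ˣ` with `x y ∈ 1 + q b⁻¹`.
"`x` generates `b/q`" is formalized as `b ⊆ span {x} + q`, and similarly for `y`. -/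
theorem stmt_13 (F : Type*) [Field F] [NumberField F]
    (b q : FractionalIdeal (nonZeroDivisors (RingOfIntegers F)) F)
    (hb : b ≠ 0) (hq : q ≠ 0) (hqb : q ≤ b) (x : F) (hx : x ∈ b)
    (hxgen : (b : Submodule (RingOfIntegers F) F) ≤
      Submodule.span (RingOfIntegers F) {x} ⊔ (q : Submodule (RingOfIntegers F) F)) :
    ∃ y : F,
      (y ∈ b⁻¹ ∧
        ((b⁻¹ : FractionalIdeal (nonZeroDivisors (RingOfIntegers F)) F) :
            Submodule (RingOfIntegers F) F) ≤
          Submodule.span (RingOfIntegers F) {y} ⊔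
            ((q * b⁻¹ * b⁻¹ : FractionalIdeal (nonZeroDivisors (RingOfIntegers F)) F) :
              Submodule (RingOfIntegers F) F) ∧
        x * y - 1 ∈ q * b⁻¹) ∧
      ∀ y' : F,
        (y' ∈ b⁻¹ ∧
          ((b⁻¹ : FractionalIdeal (nonZeroDivisors (RingOfIntegers F)) F) :
              Submodule (RingOfIntegers F) F) ≤
            Submodule.span (RingOfIntegers F) {y'} ⊔
              ((q * b⁻¹ * b⁻¹ : FractionalIdeal (nonZeroDivisors (RingOfIntegers F)) F) :
                Submodule (RingOfIntegers F) F) ∧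
          x * y' - 1 ∈ q * b⁻¹) →
        y - y' ∈ q * b⁻¹ * b⁻¹ :=
  stmt_13_general F b q hb x hx hxgen
end
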